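/- arXiv:2301.05857 — 6 statements merged into one kernel-verified Lean document; each statement's English description precedes it below -/
import Mathlib

section
/- Let (Ω, F, μ) be a probability space with filtration (F_n), and ω > 0 an integrable weight with ω_n := E(ω | F_n). Suppose there exist C > 1 and 0 < ε' < 1 such that E(ω χ_A | F_n)/ω_n ≤ C · E(χ_A | F_n)^{ε'} a.e. for all measurable A and all n. Then there exist q > 1 and C' > 0 such that E(ω^q | F_n) ≤ C' ω_n^q a.e. for all n. -/
open MeasureTheory Set
open scoped ENNReal

/-
Fix `n`, write `g = E(ω | Fₙ)` and `r = 1/(1 - ε')`. For `A = {ω > λ g}` the `Fₙ`-measurable `g` can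
be pulled out of `E(g χ_A | Fₙ) ≤ E(ω χ_A | Fₙ)/λ`, so the hypothesis gives `λ P ≤ C P^ε'` for
`P = E(χ_A | Fₙ)`, i.e. `P ≤ (C/λ)^r`. Integrating over `B ∈ Fₙ` yields the distributional estimate
`μ(B ∩ {ω/g > λ}) ≤ (C/λ)^r μ(B)`, and the layer-cake formula turns it into
`∫_B (ω/g)^q ≤ C^q r/(r - q) μ(B)` for every `0 < q < r`. Hence `E((ω/g)^q | Fₙ) ≤ C^q r/(r - q)`,
and `ω^q = g^q (ω/g)^q` with `g^q` `Fₙ`-measurable.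
-/

lemma lintegral_Ioc_zero_rpow {a c : ℝ} (ha : -1 < a) (hc : 0 ≤ c) :
    ∫⁻ t in Ioc 0 c, ENNReal.ofReal (t ^ a) = ENNReal.ofReal (c ^ (a + 1) / (a + 1)) := by
  rw [← ofReal_integral_eq_lintegral_ofReal
      ((intervalIntegrable_iff_integrableOn_Ioc_of_le hc).1
        (intervalIntegral.intervalIntegrable_rpow' ha))
      (ae_restrict_of_forall_mem measurableSet_Ioc fun t ht => Real.rpow_nonneg ht.1.le a),
    ← intervalIntegral.integral_of_le hc, integral_rpow (Or.inl ha),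
    Real.zero_rpow (by linarith), sub_zero]

lemma lintegral_Ioi_rpow {a c : ℝ} (ha : a < -1) (hc : 0 < c) :
    ∫⁻ t in Ioi c, ENNReal.ofReal (t ^ a) = ENNReal.ofReal (-c ^ (a + 1) / (a + 1)) := by
  rw [← ofReal_integral_eq_lintegral_ofReal (integrableOn_Ioi_rpow_of_lt ha hc)
      (ae_restrict_of_forall_mem measurableSet_Ioi fun t ht => Real.rpow_nonneg (hc.trans ht).le a),
    integral_Ioi_rpow_of_lt ha hc]

lemma lintegral_rpow_le_of_measure_lt_le {α : Type*} [MeasurableSpace α] (ν : Measure α)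
    {f : α → ℝ} (hf_nn : 0 ≤ᵐ[ν] f) (hf : AEMeasurable f ν) {q r C : ℝ} (hq : 0 < q)
    (hqr : q < r) (hC : 0 < C)
    (htail : ∀ t, C < t → ν {x | t < f x} ≤ ENNReal.ofReal ((C / t) ^ r) * ν univ) :
    ∫⁻ x, ENNReal.ofReal (f x ^ q) ∂ν ≤ ENNReal.ofReal (C ^ q * r / (r - q)) * ν univ := by
  have hrq : 0 < r - q := sub_pos.2 hqr
  have h_tail_rpow : ∀ t ∈ Ioi C,
      ν {x | t < f x} * ENNReal.ofReal (t ^ (q - 1)) ≤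
        ν univ * (ENNReal.ofReal (C ^ r) * ENNReal.ofReal (t ^ (q - 1 - r))) := by
    intro t (ht : C < t)
    have ht0 : 0 < t := hC.trans ht
    calc ν {x | t < f x} * ENNReal.ofReal (t ^ (q - 1))
        ≤ ENNReal.ofReal ((C / t) ^ r) * ν univ * ENNReal.ofReal (t ^ (q - 1)) := by
          gcongr; exact htail t ht
      _ = ν univ * ENNReal.ofReal ((C / t) ^ r * t ^ (q - 1)) := by
          rw [ENNReal.ofReal_mul (by positivity)]; ring
      _ = ν univ * (ENNReal.ofReal (C ^ r) * ENNReal.ofReal (t ^ (q - 1 - r))) := by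
          rw [← ENNReal.ofReal_mul (by positivity), Real.div_rpow hC.le ht0.le,
            Real.rpow_sub ht0 (q - 1) r]
          ring_nf
  calc ∫⁻ x, ENNReal.ofReal (f x ^ q) ∂ν
      = ENNReal.ofReal q * ∫⁻ t in Ioi 0, ν {x | t < f x} * ENNReal.ofReal (t ^ (q - 1)) :=
        lintegral_rpow_eq_lintegral_meas_lt_mul ν hf_nn hf hq
    _ = ENNReal.ofReal q * ((∫⁻ t in Ioc 0 C, ν {x | t < f x} * ENNReal.ofReal (t ^ (q - 1))) +
          ∫⁻ t in Ioi C, ν {x | t < f x} * ENNReal.ofReal (t ^ (q - 1))) := by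
        rw [← Ioc_union_Ioi_eq_Ioi hC.le, lintegral_union measurableSet_Ioi Ioc_disjoint_Ioi_same]
    _ ≤ ENNReal.ofReal q * ((∫⁻ t in Ioc 0 C, ν univ * ENNReal.ofReal (t ^ (q - 1))) +
          ∫⁻ t in Ioi C, ν univ * (ENNReal.ofReal (C ^ r) * ENNReal.ofReal (t ^ (q - 1 - r)))) := by
        gcongr ENNReal.ofReal q * (?_ + ?_)
        · exact setLIntegral_mono' measurableSet_Ioc fun t _ =>
            mul_le_mul_left (measure_mono (subset_univ _)) _
        · exact setLIntegral_mono' measurableSet_Ioi h_tail_rpow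
    _ = ENNReal.ofReal q * (ν univ * ENNReal.ofReal (C ^ q / q) +
          ν univ * ENNReal.ofReal (C ^ q / (r - q))) := by
        rw [lintegral_const_mul _ (by fun_prop), lintegral_const_mul _ (by fun_prop),
          lintegral_const_mul _ (by fun_prop), lintegral_Ioc_zero_rpow (by linarith) hC.le,
          lintegral_Ioi_rpow (by linarith) hC, ← ENNReal.ofReal_mul (by positivity),
          sub_add_cancel, show q - 1 - r + 1 = q - r by ring, neg_div, ← div_neg, neg_sub,
          ← mul_div_assoc, ← Real.rpow_add hC, add_sub_cancel]
    _ = ENNReal.ofReal (C ^ q * r / (r - q)) * ν univ := by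
        rw [← mul_add, ← ENNReal.ofReal_add (by positivity) (by positivity), mul_left_comm,
          ← ENNReal.ofReal_mul hq.le, mul_comm]
        congr 2
        field_simp
        ring

lemma le_div_rpow_of_mul_le_mul_rpow {P l C ε : ℝ} (hP : 0 ≤ P) (hl : 0 < l) (hC : 0 ≤ C)
    (hε : ε < 1) (h : l * P ≤ C * P ^ ε) : P ≤ (C / l) ^ (1 - ε)⁻¹ := by
  rcases hP.eq_or_lt with rfl | hP
  · positivity
  rw [Real.le_rpow_inv_iff_of_pos hP.le (by positivity) (by linarith),
    Real.rpow_sub hP, Real.rpow_one, div_le_div_iff₀ (by positivity) hl]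
  linarith

section CondExp

variable {Ω : Type*} {m m0 : MeasurableSpace Ω} {μ : Measure Ω}

lemma ae_pos_condExp (hm : m ≤ m0) [SigmaFinite (μ.trim hm)] {f : Ω → ℝ}
    (hf : Integrable f μ) (hf_pos : ∀ᵐ x ∂μ, 0 < f x) : ∀ᵐ x ∂μ, 0 < μ[f | m] x := by
  set s := μ[f | m] ⁻¹' Iic 0
  have hs : MeasurableSet[m] s := stronglyMeasurable_condExp.measurable measurableSet_Iic
  have h_nonneg : 0 ≤ᵐ[μ.restrict s] f := ae_restrict_of_ae (hf_pos.mono fun x hx => hx.le)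
  have h_integral : ∫ x in s, f x ∂μ = 0 := by
    refine le_antisymm ?_ (integral_nonneg_of_ae h_nonneg)
    rw [← setIntegral_condExp hm hf hs]
    exact setIntegral_nonpos (hm _ hs) fun x hx => hx
  have h_zero := (setIntegral_eq_zero_iff_of_nonneg_ae h_nonneg hf.integrableOn).1 h_integral
  have h_null : ∀ᵐ x ∂μ, x ∈ s → False := by
    refine (ae_restrict_iff' (hm _ hs)).1 ?_
    filter_upwards [h_zero, ae_restrict_of_ae hf_pos] with x h0 hx
    exact (h0 ▸ hx).false
  filter_upwards [h_null] with x hx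
  exact not_le.1 hx

lemma condExp_indicator_le_of_condExp_indicator_div_le [IsFiniteMeasure μ]
    {g ω : Ω → ℝ} (hg : StronglyMeasurable[m] g) (hg_int : Integrable g μ)
    (hg_pos : ∀ᵐ x ∂μ, 0 < g x) (hω : Integrable ω μ) {A : Set Ω} (hA : MeasurableSet A)
    {l C ε : ℝ} (hl : 0 < l) (hC : 0 ≤ C) (hε : ε < 1)
    (hAω : ∀ᵐ x ∂μ, x ∈ A → l * g x ≤ ω x)
    (hCF : ∀ᵐ x ∂μ, μ[A.indicator ω | m] x / g x ≤
      C * (μ[A.indicator (fun _ => (1 : ℝ)) | m] x) ^ ε) :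
    ∀ᵐ x ∂μ, μ[A.indicator (fun _ => (1 : ℝ)) | m] x ≤ (C / l) ^ (1 - ε)⁻¹ := by
  set χ : Ω → ℝ := A.indicator fun _ => 1
  have hχ_int : Integrable χ μ := (integrable_const 1).indicator hA
  have hgχ_int : Integrable (g * χ) μ :=
    hg_int.mul_bdd (c := 1) hχ_int.aestronglyMeasurable
      (ae_of_all _ fun x => (norm_indicator_le_norm_self _ x).trans norm_one.le)
  have h_pull : μ[g * χ | m] =ᵐ[μ] g * μ[χ | m] :=
    condExp_mul_of_stronglyMeasurable_left hg hgχ_int hχ_int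
  have h_mono : μ[l • (g * χ) | m] ≤ᵐ[μ] μ[A.indicator ω | m] := by
    refine condExp_mono (hgχ_int.smul l) (hω.indicator hA) ?_
    filter_upwards [hAω] with x hx
    by_cases hxA : x ∈ A <;> simp [χ, hxA, hx]
  filter_upwards [h_pull, h_mono, condExp_smul l (g * χ) m, hCF, hg_pos,
    condExp_nonneg (m := m) (ae_of_all μ fun x =>
      Set.indicator_nonneg (fun _ _ => zero_le_one) x : 0 ≤ᵐ[μ] χ)]
    with x h_pull h_mono h_smul hCF hgx hP
  refine le_div_rpow_of_mul_le_mul_rpow hP hl hC hε ?_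
  rw [div_le_iff₀ hgx] at hCF
  have : l * (g x * μ[χ | m] x) ≤ C * μ[χ | m] x ^ ε * g x := by
    simpa [h_smul, h_pull] using h_mono.trans hCF
  nlinarith

lemma measure_inter_le_of_condExp_indicator_le (hm : m ≤ m0) [IsFiniteMeasure μ]
    {A s : Set Ω} (hA : MeasurableSet A) (hs : MeasurableSet[m] s) {c : ℝ} (hc : 0 ≤ c)
    (h : ∀ᵐ x ∂μ, μ[A.indicator (fun _ => (1 : ℝ)) | m] x ≤ c) :
    μ (A ∩ s) ≤ ENNReal.ofReal c * μ s := by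
  have h_real : μ.real (A ∩ s) ≤ c * μ.real s :=
    calc μ.real (A ∩ s) = ∫ x in s, μ[A.indicator (fun _ => (1 : ℝ)) | m] x ∂μ := by
          rw [setIntegral_condExp hm ((integrable_const 1).indicator hA) hs,
            setIntegral_indicator hA, setIntegral_const, smul_eq_mul, mul_one, inter_comm]
      _ ≤ ∫ x in s, c ∂μ := setIntegral_mono_ae integrable_condExp.integrableOn
          (integrable_const c).integrableOn h
      _ = c * μ.real s := by rw [setIntegral_const, smul_eq_mul, mul_comm]
  rw [← ofReal_measureReal, ← ofReal_measureReal, ← ENNReal.ofReal_mul hc]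
  exact ENNReal.ofReal_le_ofReal h_real

lemma condExp_le_of_forall_setLIntegral_le (hm : m ≤ m0) [IsFiniteMeasure μ] {f : Ω → ℝ}
    (hf : Integrable f μ) (hf_nn : 0 ≤ᵐ[μ] f) {c : ℝ} (hc : 0 ≤ c)
    (h : ∀ s, MeasurableSet[m] s → ∫⁻ x in s, ENNReal.ofReal (f x) ∂μ ≤ ENNReal.ofReal c * μ s) :
    ∀ᵐ x ∂μ, μ[f | m] x ≤ c := by
  refine ae_le_of_ae_le_trim (hm := hm) (f₂ := fun _ => c) ?_
  refine ae_le_of_forall_setIntegral_le (integrable_condExp.trim hm stronglyMeasurable_condExp)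
    (integrable_const c) fun s hs _ => ?_
  rw [← setIntegral_trim hm stronglyMeasurable_condExp hs, setIntegral_condExp hm hf hs,
    setIntegral_const, smul_eq_mul, measureReal_def, trim_measurableSet_eq hm hs,
    integral_eq_lintegral_of_nonneg_ae (ae_restrict_of_ae hf_nn) hf.aestronglyMeasurable.restrict]
  calc _ ≤ (ENNReal.ofReal c * μ s).toReal :=
        ENNReal.toReal_mono (ENNReal.mul_ne_top ENNReal.ofReal_ne_top (measure_ne_top μ s)) (h s hs)
    _ = (μ s).toReal * c := by rw [ENNReal.toReal_mul, ENNReal.toReal_ofReal hc, mul_comm]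

lemma condExp_mul_le_of_condExp_le {h F : Ω → ℝ} (hh : StronglyMeasurable[m] h)
    (hh_nn : 0 ≤ᵐ[μ] h) (hF : Integrable F μ) {c : ℝ} (hc : 0 ≤ c)
    (hFc : ∀ᵐ x ∂μ, μ[F | m] x ≤ c) : ∀ᵐ x ∂μ, μ[h * F | m] x ≤ c * h x := by
  by_cases hhF : Integrable (h * F) μ
  · filter_upwards [condExp_mul_of_stronglyMeasurable_left hh hhF hF, hFc, hh_nn]
      with x h_pull hx hhx
    rw [h_pull, Pi.mul_apply, mul_comm c]
    exact mul_le_mul_of_nonneg_left hx hhx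
  · rw [condExp_of_not_integrable hhF]
    filter_upwards [hh_nn] with x hx
    exact mul_nonneg hc hx

lemma measure_superlevel_div_condExp_inter_le (hm : m ≤ m0) [IsFiniteMeasure μ]
    {ω : Ω → ℝ} (hω : Measurable ω) (hpos : ∀ᵐ x ∂μ, 0 < ω x) (hint : Integrable ω μ)
    {C ε : ℝ} (hC : 0 ≤ C) (hε : ε < 1)
    (hCF : ∀ A : Set Ω, MeasurableSet A → ∀ᵐ x ∂μ, μ[A.indicator ω | m] x / μ[ω | m] x ≤
      C * (μ[A.indicator (fun _ => (1 : ℝ)) | m] x) ^ ε)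
    {t : ℝ} (ht : 0 < t) {s : Set Ω} (hs : MeasurableSet[m] s) :
    μ ({x | t < ω x / μ[ω | m] x} ∩ s) ≤ ENNReal.ofReal ((C / t) ^ (1 - ε)⁻¹) * μ s := by
  have hg_pos : ∀ᵐ x ∂μ, 0 < μ[ω | m] x := ae_pos_condExp hm hint hpos
  have hA : MeasurableSet {x | t < ω x / μ[ω | m] x} :=
    measurableSet_lt measurable_const (hω.div (stronglyMeasurable_condExp.mono hm).measurable)
  refine measure_inter_le_of_condExp_indicator_le hm hA hs
    (Real.rpow_nonneg (div_nonneg hC ht.le) _) ?_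
  refine condExp_indicator_le_of_condExp_indicator_div_le stronglyMeasurable_condExp
    integrable_condExp hg_pos hint hA ht hC hε ?_ (hCF _ hA)
  filter_upwards [hg_pos] with x hgx hx
  exact ((lt_div_iff₀ hgx).1 hx).le

lemma setLIntegral_div_condExp_rpow_le (hm : m ≤ m0) [IsFiniteMeasure μ]
    {ω : Ω → ℝ} (hω : Measurable ω) (hpos : ∀ᵐ x ∂μ, 0 < ω x) (hint : Integrable ω μ)
    {C ε q : ℝ} (hC : 0 < C) (hq : 0 < q) (hqr : q < (1 - ε)⁻¹)
    (hCF : ∀ A : Set Ω, MeasurableSet A → ∀ᵐ x ∂μ, μ[A.indicator ω | m] x / μ[ω | m] x ≤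
      C * (μ[A.indicator (fun _ => (1 : ℝ)) | m] x) ^ ε)
    {s : Set Ω} (hs : MeasurableSet[m] s) :
    ∫⁻ x in s, ENNReal.ofReal ((ω x / μ[ω | m] x) ^ q) ∂μ ≤
      ENNReal.ofReal (C ^ q * (1 - ε)⁻¹ / ((1 - ε)⁻¹ - q)) * μ s := by
  have hε : ε < 1 := by linarith [inv_pos.1 (hq.trans hqr)]
  have h_ratio_nn : 0 ≤ᵐ[μ.restrict s] fun x => ω x / μ[ω | m] x := by
    filter_upwards [ae_restrict_of_ae hpos, ae_restrict_of_ae (ae_pos_condExp hm hint hpos)]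
      with x hωx hgx using div_nonneg hωx.le hgx.le
  have h_ratio_meas : Measurable fun x => ω x / μ[ω | m] x :=
    hω.div (stronglyMeasurable_condExp.mono hm).measurable
  simpa only [Measure.restrict_apply_univ] using
    lintegral_rpow_le_of_measure_lt_le (μ.restrict s) h_ratio_nn h_ratio_meas.aemeasurable hq hqr
      hC fun t ht => by
        rw [Measure.restrict_apply (measurableSet_lt measurable_const h_ratio_meas),
          Measure.restrict_apply_univ]
        exact measure_superlevel_div_condExp_inter_le hm hω hpos hint hC.le hε hCF
          (hC.trans ht) hs

theorem condExp_rpow_le_of_condExp_indicator_div_le (hm : m ≤ m0) [IsFiniteMeasure μ]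
    {ω : Ω → ℝ} (hω : Measurable ω) (hpos : ∀ᵐ x ∂μ, 0 < ω x) (hint : Integrable ω μ)
    {C ε q : ℝ} (hC : 0 < C) (hq : 0 < q) (hqr : q < (1 - ε)⁻¹)
    (hCF : ∀ A : Set Ω, MeasurableSet A → ∀ᵐ x ∂μ, μ[A.indicator ω | m] x / μ[ω | m] x ≤
      C * (μ[A.indicator (fun _ => (1 : ℝ)) | m] x) ^ ε) :
    ∀ᵐ x ∂μ, μ[fun y => ω y ^ q | m] x ≤
      C ^ q * (1 - ε)⁻¹ / ((1 - ε)⁻¹ - q) * (μ[ω | m] x) ^ q := by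
  set g := μ[ω | m]
  set F := fun x => (ω x / g x) ^ q
  have hK : 0 ≤ C ^ q * (1 - ε)⁻¹ / ((1 - ε)⁻¹ - q) :=
    div_nonneg (mul_nonneg (by positivity) (hq.trans hqr).le) (sub_pos.2 hqr).le
  have hg_pos : ∀ᵐ x ∂μ, 0 < g x := ae_pos_condExp hm hint hpos
  have hg_sm : StronglyMeasurable[m] g := stronglyMeasurable_condExp
  have hF_nn : 0 ≤ᵐ[μ] F := by
    filter_upwards [hpos, hg_pos] with x hωx hgx using
      Real.rpow_nonneg (div_nonneg hωx.le hgx.le) q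
  have h_setLIntegral := fun s (hs : MeasurableSet[m] s) =>
    setLIntegral_div_condExp_rpow_le hm hω hpos hint hC hq hqr hCF hs
  have hF_int : Integrable F μ := by
    refine ⟨((hω.div (hg_sm.mono hm).measurable).pow_const q).aestronglyMeasurable,
      (hasFiniteIntegral_iff_ofReal hF_nn).2 ?_⟩
    simpa only [Measure.restrict_univ] using (h_setLIntegral univ MeasurableSet.univ).trans_lt
      (ENNReal.mul_lt_top ENNReal.ofReal_lt_top (measure_lt_top μ univ))
  have h_factor : (fun y => ω y ^ q) =ᵐ[μ] (fun x => g x ^ q) * F := by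
    filter_upwards [hpos, hg_pos] with x hωx hgx
    rw [Pi.mul_apply, ← Real.mul_rpow hgx.le (div_nonneg hωx.le hgx.le), mul_div_cancel₀ _ hgx.ne']
  filter_upwards [condExp_congr_ae (m := m) h_factor,
    condExp_mul_le_of_condExp_le (hg_sm.measurable.pow_const q).stronglyMeasurable
      (by filter_upwards [hg_pos] with x hx using Real.rpow_nonneg hx.le q) hF_int hK
      (condExp_le_of_forall_setLIntegral_le hm hF_int hF_nn hK h_setLIntegral)]
    with x h_eq h_le
  rw [h_eq]
  exact h_le

end CondExp

theorem stmt7 {Ω : Type*} {m0 : MeasurableSpace Ω} {μ : Measure Ω} [IsProbabilityMeasure μ]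
    (ℱ : Filtration ℕ m0)
    {ω : Ω → ℝ} (hω : Measurable ω) (hpos : ∀ x, 0 < ω x) (hint : Integrable ω μ)
    (hCF : ∃ C > 1, ∃ ε' : ℝ, 0 < ε' ∧ ε' < 1 ∧
      ∀ A : Set Ω, MeasurableSet A → ∀ n : ℕ,
        ∀ᵐ x ∂μ, (μ[A.indicator ω | ℱ n]) x / (μ[ω | ℱ n]) x ≤
          C * ((μ[A.indicator (fun _ => (1 : ℝ)) | ℱ n]) x) ^ ε') :
    ∃ q : ℝ, 1 < q ∧ ∃ C' > 0, ∀ n : ℕ,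
      ∀ᵐ x ∂μ, (μ[fun y => ω y ^ q | ℱ n]) x ≤ C' * ((μ[ω | ℱ n]) x) ^ q := by
  obtain ⟨C, hC, ε, hε0, hε1, hCF⟩ := hCF
  set r := (1 - ε)⁻¹
  have hr : 1 < r := one_lt_inv₀ (by linarith) |>.2 (by linarith)
  refine ⟨(1 + r) / 2, by linarith, C ^ ((1 + r) / 2) * r / (r - (1 + r) / 2),
    div_pos (by positivity) (by linarith), fun n => ?_⟩
  exact condExp_rpow_le_of_condExp_indicator_div_le (ℱ.le n) hω (ae_of_all _ hpos) hint
    (by linarith) (by linarith) (by linarith) fun A hA => hCF A hA n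
end

section
/- Let (Ω, F, μ) be a probability space with filtration (F_n) and ω > 0 an integrable weight with ω_n := E(ω | F_n). If there exist 0 < γ, δ < 1 such that E(χ_{{ω ≤ γ ω_n}} | F_n) ≤ δ a.e. for all n, then there exist 0 < α, β < 1 such that for every measurable set A and every n: E(χ_A | F_n) ≤ α a.e. implies E(ω χ_A | F_n)/ω_n ≤ β a.e. -/
open MeasureTheory

/-!
With `ω_n = E(ω | F_n)` and `B = {ω ≤ γ ω_n}`, the pointwise inequality
`γ ω_n (1 - χ_A - χ_B) ≤ χ_{Aᶜ} ω` survives conditioning on `F_n`, since `γ ω_n` is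
`F_n`-measurable. Hence `E(χ_{Aᶜ} ω | F_n) ≥ γ (1 - α - δ) ω_n`, and for `α = (1 - δ)/2` this is
`γ α ω_n`; subtracting from `ω_n` gives `E(χ_A ω | F_n) ≤ (1 - γ α) ω_n`.
-/

namespace MeasureTheory

variable {Ω : Type*} {m m0 : MeasurableSpace Ω} {μ : Measure Ω}

theorem ae_pos_condExp_of_pos (hm : m ≤ m0) [SigmaFinite (μ.trim hm)] {f : Ω → ℝ}
    (hf : ∀ x, 0 < f x) (hfi : Integrable f μ) : ∀ᵐ x ∂μ, 0 < μ[f | m] x := by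
  set S := {x | μ[f | m] x ≤ 0}
  have hS : MeasurableSet[m] S :=
    stronglyMeasurable_condExp.measurableSet_le stronglyMeasurable_const
  have hS_int : ∫ x in S, f x ∂μ ≤ 0 := by
    rw [← setIntegral_condExp hm hfi hS]
    exact setIntegral_nonpos (hm S hS) fun x hx => hx
  have hμS : μ S = 0 := by
    rw [← Set.univ_inter S, ← Function.support_eq_univ fun x => (hf x).ne']
    refine nonpos_iff_eq_zero.1 (not_lt.1 fun hpos => hS_int.not_gt ?_)
    exact (setIntegral_pos_iff_support_of_nonneg_ae
      (.of_forall fun x => (hf x).le) hfi.integrableOn).2 hpos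
  filter_upwards [measure_eq_zero_iff_ae_notMem.1 hμS] with x hx
  exact not_le.1 hx

theorem mul_condExp_le_condExp_of_mul_le {f g h : Ω → ℝ} {C : ℝ} (hf : StronglyMeasurable[m] f)
    (hfi : Integrable f μ) (hh : Integrable h μ) (hh_bdd : ∀ᵐ x ∂μ, ‖h x‖ ≤ C)
    (hg : Integrable g μ) (hfhg : f * h ≤ᵐ[μ] g) : f * μ[h | m] ≤ᵐ[μ] μ[g | m] := by
  have hfh : Integrable (f * h) μ := hfi.mul_bdd hh.aestronglyMeasurable hh_bdd
  exact (condExp_mul_of_stronglyMeasurable_left hf hfh hh).symm.trans_le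
    (condExp_mono hfh hg hfhg)

theorem mul_one_sub_indicator_sub_indicator_le {ω W : Ω → ℝ} (γ : ℝ) (A : Set Ω) {x : Ω}
    (hω : 0 ≤ ω x) :
    γ * W x * (1 - A.indicator (fun _ => 1) x - {y | ω y ≤ γ * W y}.indicator (fun _ => 1) x)
      ≤ Aᶜ.indicator ω x := by
  by_cases hxA : x ∈ A <;> by_cases hxB : ω x ≤ γ * W x <;>
    simp [Set.indicator, hxA, hxB] <;> linarith

theorem condExp_indicator_le_mul_condExp (hm : m ≤ m0) [IsFiniteMeasure μ] {ω : Ω → ℝ}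
    (hω : Measurable ω) (hω0 : ∀ x, 0 ≤ ω x) (hωi : Integrable ω μ) (γ : ℝ) {A : Set Ω}
    (hA : MeasurableSet A) :
    ∀ᵐ x ∂μ, μ[A.indicator ω | m] x ≤
      (1 - γ * (1 - μ[A.indicator (fun _ => 1) | m] x
        - μ[{y | ω y ≤ γ * μ[ω | m] y}.indicator (fun _ => 1) | m] x)) * μ[ω | m] x := by
  set B := {y | ω y ≤ γ * μ[ω | m] y}
  have hB : MeasurableSet B :=
    measurableSet_le hω ((stronglyMeasurable_condExp.mono hm).measurable.const_mul γ)
  have hAi : Integrable (A.indicator fun _ => (1 : ℝ)) μ := (integrable_const 1).indicator hA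
  have hBi : Integrable (B.indicator fun _ => (1 : ℝ)) μ := (integrable_const 1).indicator hB
  set h : Ω → ℝ := (fun _ => 1) - A.indicator (fun _ => 1) - B.indicator (fun _ => 1)
  have hh_bdd : ∀ x, ‖h x‖ ≤ 1 := by
    intro x
    by_cases hxA : x ∈ A <;> by_cases hxB : x ∈ B <;> simp [h, hxA, hxB]
  have hh_ce : μ[h | m] =ᵐ[μ] (fun _ => 1) - μ[A.indicator (fun _ => 1) | m]
      - μ[B.indicator (fun _ => 1) | m] := by
    refine (condExp_sub ((integrable_const 1).sub hAi) hBi m).trans ?_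
    refine .sub ((condExp_sub (integrable_const 1) hAi m).trans ?_) .rfl
    rw [condExp_const hm]
  have hlower : (fun x => γ * μ[ω | m] x) * μ[h | m] ≤ᵐ[μ] μ[Aᶜ.indicator ω | m] :=
    mul_condExp_le_condExp_of_mul_le (stronglyMeasurable_condExp.const_mul γ)
      (integrable_condExp.const_mul γ) ((integrable_const 1).sub hAi |>.sub hBi)
      (.of_forall hh_bdd) (hωi.indicator hA.compl)
      (.of_forall fun x => mul_one_sub_indicator_sub_indicator_le γ A (hω0 x))
  have hdecomp : μ[ω | m] =ᵐ[μ] μ[A.indicator ω | m] + μ[Aᶜ.indicator ω | m] := by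
    simpa only [Set.indicator_self_add_compl] using
      condExp_add (hωi.indicator hA) (hωi.indicator hA.compl) m
  filter_upwards [hh_ce, hlower, hdecomp] with x hhx hlx hdx
  simp only [Pi.mul_apply, hhx, Pi.sub_apply, Pi.add_apply] at hlx hdx
  linarith

end MeasureTheory

theorem stmt8 {Ω : Type*} {m0 : MeasurableSpace Ω} {μ : Measure Ω} [IsProbabilityMeasure μ]
    (ℱ : Filtration ℕ m0)
    {ω : Ω → ℝ} (hω : Measurable ω) (hpos : ∀ x, 0 < ω x) (hint : Integrable ω μ)
    (hcon : ∃ γ : ℝ, 0 < γ ∧ γ < 1 ∧ ∃ δ : ℝ, 0 < δ ∧ δ < 1 ∧ ∀ n : ℕ,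
      ∀ᵐ x ∂μ,
        (μ[Set.indicator {y | ω y ≤ γ * (μ[ω | ℱ n]) y} (fun _ => (1 : ℝ)) | ℱ n]) x ≤ δ) :
    ∃ α : ℝ, 0 < α ∧ α < 1 ∧ ∃ β : ℝ, 0 < β ∧ β < 1 ∧
      ∀ A : Set Ω, MeasurableSet A → ∀ n : ℕ,
        (∀ᵐ x ∂μ, (μ[A.indicator (fun _ => (1 : ℝ)) | ℱ n]) x ≤ α) →
        (∀ᵐ x ∂μ, (μ[A.indicator ω | ℱ n]) x / (μ[ω | ℱ n]) x ≤ β) := by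
  obtain ⟨γ, hγ0, hγ1, δ, hδ0, hδ1, hcon⟩ := hcon
  refine ⟨(1 - δ) / 2, by linarith, by linarith, 1 - γ * ((1 - δ) / 2), by nlinarith, by nlinarith,
    fun A hA n hA_small => ?_⟩
  filter_upwards [condExp_indicator_le_mul_condExp (ℱ.le n) hω (fun x => (hpos x).le) hint γ hA,
    ae_pos_condExp_of_pos (ℱ.le n) hpos hint, hA_small, hcon n] with x hle hW hAx hBx
  rw [div_le_iff₀ hW]
  refine hle.trans (mul_le_mul_of_nonneg_right ?_ hW.le)
  nlinarith
end

section
/- Let (Ω, F, μ) be a probability space with filtration (F_n) and ω > 0 an integrable weight with ω_n := E(ω | F_n). Suppose there exist 0 < α, β < 1 such that for all measurable A and all n, E(χ_A | F_n) ≤ α a.e. implies E(ω χ_A | F_n)/ω_n ≤ β a.e. Then there exist 0 < γ, δ < 1 such that E(χ_{{ω ≤ γ ω_n}} | F_n) ≤ δ a.e. for all n. -/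
/-!
Put `E = {ω ≤ γ ω_n}` with `γ < 1 - β` and let `B` be the `ℱ n`-measurable set where
`E(χ_E | ℱ n) > 1 - α`. On `A = B ∩ Eᶜ` we have `E(χ_A | ℱ n) = χ_B (1 - E(χ_E | ℱ n)) ≤ α`, so the
hypothesis gives `E(ω χ_A | ℱ n) ≤ β ω_n`. But on `B` this conditional expectation is
`E(ω χ_{Eᶜ} | ℱ n) ≥ (1 - γ) ω_n > β ω_n`, hence `B` is null and `δ = 1 - α` works.
-/

open MeasureTheory

namespace MeasureTheory

variable {Ω : Type*} {m m0 : MeasurableSpace Ω} {μ : Measure Ω}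

theorem ae_condExp_pos (hm : m ≤ m0) [SigmaFinite (μ.trim hm)] {f : Ω → ℝ} (hf : Integrable f μ)
    (hpos : ∀ᵐ x ∂μ, 0 < f x) : ∀ᵐ x ∂μ, 0 < μ[f | m] x := by
  set s := {x | μ[f | m] x ≤ 0}
  have hs : MeasurableSet[m] s :=
    stronglyMeasurable_condExp.measurableSet_le stronglyMeasurable_const
  have hf_nonneg : 0 ≤ᵐ[μ.restrict s] f := ae_restrict_of_ae (hpos.mono fun _ hx => hx.le)
  have hint_zero : ∫ x in s, f x ∂μ = 0 := by
    refine le_antisymm ?_ (setIntegral_nonneg_of_ae_restrict hf_nonneg)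
    rw [← setIntegral_condExp hm hf hs]
    exact setIntegral_nonpos (hm s hs) fun _ hx => hx
  have hf_zero : f =ᵐ[μ.restrict s] 0 :=
    (integral_eq_zero_iff_of_nonneg_ae hf_nonneg hf.integrableOn).1 hint_zero
  have hs_null : μ s = 0 := by
    have h : ∀ᵐ x ∂μ.restrict s, False := by
      filter_upwards [hf_zero, ae_restrict_of_ae hpos] with x h0 hx
      exact hx.ne' h0
    rwa [Filter.eventually_false_iff_eq_bot, ae_eq_bot, Measure.restrict_eq_zero] at h
  filter_upwards [measure_eq_zero_iff_ae_notMem.mp hs_null] with x hx using not_le.1 hx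

theorem condExp_indicator_inter {f : Ω → ℝ} {B C : Set Ω} (hf : Integrable f μ)
    (hB : MeasurableSet[m] B) (hC : MeasurableSet C) :
    μ[(B ∩ C).indicator f | m] =ᵐ[μ] B.indicator (μ[C.indicator f | m]) := by
  rw [← Set.indicator_indicator]
  exact condExp_indicator (hf.indicator hC) hB

theorem condExp_indicator_le_of_forall_mem_le (hm : m ≤ m0) [SigmaFinite (μ.trim hm)]
    {f g : Ω → ℝ} {E : Set Ω} (hf : Integrable f μ) (hg : StronglyMeasurable[m] g)
    (hgi : Integrable g μ) (hg0 : 0 ≤ᵐ[μ] g) (hE : MeasurableSet E) (hfg : ∀ x ∈ E, f x ≤ g x) :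
    μ[E.indicator f | m] ≤ᵐ[μ] g := by
  refine (condExp_mono (hf.indicator hE) hgi ?_).trans_eq
    (condExp_of_stronglyMeasurable hm hg hgi).eventuallyEq
  filter_upwards [hg0] with x hx
  by_cases hxE : x ∈ E
  · simpa [hxE] using hfg x hxE
  · simpa [hxE] using hx

theorem measurableSet_le_const_mul_condExp (hm : m ≤ m0) {ω : Ω → ℝ} (hω : Measurable ω) (γ : ℝ) :
    MeasurableSet {y | ω y ≤ γ * μ[ω | m] y} :=
  measurableSet_le hω ((stronglyMeasurable_condExp.mono hm).measurable.const_mul γ)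

theorem mul_condExp_le_condExp_indicator_compl (hm : m ≤ m0) [SigmaFinite (μ.trim hm)]
    {ω : Ω → ℝ} (hω : Measurable ω) (hint : Integrable ω μ) (hω0 : 0 ≤ᵐ[μ] ω) {γ : ℝ}
    (hγ : 0 ≤ γ) :
    ∀ᵐ x ∂μ, (1 - γ) * μ[ω | m] x ≤ μ[{y | ω y ≤ γ * μ[ω | m] y}ᶜ.indicator ω | m] x := by
  set E := {y | ω y ≤ γ * μ[ω | m] y}
  have hE : MeasurableSet E := measurableSet_le_const_mul_condExp hm hω γ
  have hcompl : μ[Eᶜ.indicator ω | m] =ᵐ[μ] μ[ω | m] - μ[E.indicator ω | m] := by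
    rw [Set.indicator_compl]
    exact condExp_sub hint (hint.indicator hE) m
  have hE_le : μ[E.indicator ω | m] ≤ᵐ[μ] γ • μ[ω | m] :=
    condExp_indicator_le_of_forall_mem_le hm hint (stronglyMeasurable_condExp.const_smul γ)
      (integrable_condExp.smul γ)
      ((condExp_nonneg hω0).mono fun _ hx => mul_nonneg hγ hx) hE fun _ hx => hx
  filter_upwards [hcompl, hE_le] with x h1 h2
  simp only [h1, Pi.sub_apply, Pi.smul_apply, smul_eq_mul] at h2 ⊢
  linarith

theorem ae_condExp_indicator_sublevel_le [IsFiniteMeasure μ] (hm : m ≤ m0) {ω : Ω → ℝ}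
    (hω : Measurable ω) (hint : Integrable ω μ) (hpos : ∀ᵐ x ∂μ, 0 < ω x) {α β γ : ℝ}
    (hα : 0 ≤ α) (hγ : 0 ≤ γ) (hγβ : γ < 1 - β)
    (hM : ∀ A : Set Ω, MeasurableSet A →
      (∀ᵐ x ∂μ, μ[A.indicator (fun _ => (1 : ℝ)) | m] x ≤ α) →
      ∀ᵐ x ∂μ, μ[A.indicator ω | m] x / μ[ω | m] x ≤ β) :
    ∀ᵐ x ∂μ, μ[{y | ω y ≤ γ * μ[ω | m] y}.indicator (fun _ => (1 : ℝ)) | m] x ≤ 1 - α := by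
  set E := {y | ω y ≤ γ * μ[ω | m] y}
  have hE : MeasurableSet E := measurableSet_le_const_mul_condExp hm hω γ
  set g := μ[E.indicator (fun _ => (1 : ℝ)) | m]
  set B := {x | 1 - α < g x}
  have hB : MeasurableSet[m] B := stronglyMeasurable_const.measurableSet_lt stronglyMeasurable_condExp
  have hA : MeasurableSet (B ∩ Eᶜ) := (hm B hB).inter hE.compl
  have hcompl : μ[Eᶜ.indicator (fun _ => (1 : ℝ)) | m] =ᵐ[μ] 1 - g := by
    rw [Set.indicator_compl]
    refine (condExp_sub (integrable_const _) ((integrable_const _).indicator hE) m).trans ?_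
    rw [condExp_const hm]
    rfl
  have hA_small : ∀ᵐ x ∂μ, μ[(B ∩ Eᶜ).indicator (fun _ => (1 : ℝ)) | m] x ≤ α := by
    filter_upwards [condExp_indicator_inter (integrable_const _) hB hE.compl, hcompl]
      with x hBE hEc
    rw [hBE, Set.indicator_apply]
    split_ifs with hxB
    · rw [hEc, Pi.sub_apply, Pi.one_apply]
      linarith [show 1 - α < g x from hxB]
    · exact hα
  have hB_null : ∀ᵐ x ∂μ, x ∉ B := by
    filter_upwards [hM _ hA hA_small, condExp_indicator_inter hint hB hE.compl,
      mul_condExp_le_condExp_indicator_compl hm hω hint (hpos.mono fun _ hx => hx.le) hγ,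
      ae_condExp_pos hm hint hpos] with x hratio hBE hEc hx0 hxB
    rw [hBE, Set.indicator_of_mem hxB, div_le_iff₀ hx0] at hratio
    linarith [mul_lt_mul_of_pos_right hγβ hx0]
  filter_upwards [hB_null] with x hx using not_lt.1 hx

end MeasureTheory

theorem stmt9 {Ω : Type*} {m0 : MeasurableSpace Ω} {μ : Measure Ω} [IsProbabilityMeasure μ]
    (ℱ : Filtration ℕ m0)
    {ω : Ω → ℝ} (hω : Measurable ω) (hpos : ∀ x, 0 < ω x) (hint : Integrable ω μ)
    (hM : ∃ α : ℝ, 0 < α ∧ α < 1 ∧ ∃ β : ℝ, 0 < β ∧ β < 1 ∧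
      ∀ A : Set Ω, MeasurableSet A → ∀ n : ℕ,
        (∀ᵐ x ∂μ, (μ[A.indicator (fun _ => (1 : ℝ)) | ℱ n]) x ≤ α) →
        (∀ᵐ x ∂μ, (μ[A.indicator ω | ℱ n]) x / (μ[ω | ℱ n]) x ≤ β)) :
    ∃ γ : ℝ, 0 < γ ∧ γ < 1 ∧ ∃ δ : ℝ, 0 < δ ∧ δ < 1 ∧ ∀ n : ℕ,
      ∀ᵐ x ∂μ,
        (μ[Set.indicator {y | ω y ≤ γ * (μ[ω | ℱ n]) y} (fun _ => (1 : ℝ)) | ℱ n]) x ≤ δ := by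
  obtain ⟨α, hα0, hα1, β, hβ0, hβ1, hM⟩ := hM
  refine ⟨(1 - β) / 2, by linarith, by linarith, 1 - α, by linarith, by linarith, fun n => ?_⟩
  exact ae_condExp_indicator_sublevel_le (ℱ.le n) hω hint (.of_forall hpos) hα0.le
    (by linarith) (by linarith) fun A hA => hM A hA n
end

section
/- Let (Ω, F, μ) be a probability space with filtration (F_n) and ω > 0 an integrable weight with ω_n := E(ω | F_n). Define a median function m(ω, n): an F_n-measurable function such that E(χ_{{ω > m(ω,n)}} | F_n) ≤ 1/2 and E(χ_{{ω < m(ω,n)}} | F_n) ≤ 1/2 a.e. If ω satisfies A^{SW}_∞ (there is C > 1 with ω_n ≤ C E(ω^s | F_n)^{1/s} a.e. for all s ∈ (0,1) and all n), then there exists C' > 1 with ω_n ≤ C' m(ω, n) a.e. for all n. -/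
/-!
With `s` small enough that `C ^ s * 2 ^ (s - 1) ≤ 3 / 4`, split `ω ^ s` along the event
`{m n < ω}`. On that event the conditional Hölder inequality, the `A^{SW}_∞` bound
`ω_n ≤ C E(ω ^ s | ℱ n) ^ (1 / s)` and `E(1_{m n < ω} | ℱ n) ≤ 1 / 2` bound the conditional
expectation by `(3 / 4) E(ω ^ s | ℱ n)`; off it `ω ^ s ≤ (m n) ^ s`, which is
`ℱ n`-measurable. Hence `E(ω ^ s | ℱ n) ≤ 4 (m n) ^ s`, and `A^{SW}_∞` once more gives
`ω_n ≤ C 4 ^ (1 / s) m n`.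
-/

open MeasureTheory

section

open Real Filter Set Topology

lemma rpow_mul_rpow_le_exp_mul_add {a b s : ℝ} (ha : 0 ≤ a) (hb : 0 ≤ b) (hs0 : 0 ≤ s)
    (hs1 : s ≤ 1) (v : ℝ) :
    a ^ s * b ^ (1 - s) ≤ s * (exp ((s - 1) * v) * a) + (1 - s) * (exp (s * v) * b) := by
  have hamgm := geom_mean_le_arith_mean2_weighted hs0 (sub_nonneg.2 hs1)
    (mul_nonneg (exp_pos ((s - 1) * v)).le ha) (mul_nonneg (exp_pos (s * v)).le hb)
    (add_sub_cancel s 1)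
  have hexp : exp ((s - 1) * v * s) * exp (s * v * (1 - s)) = 1 := by
    rw [← exp_add, ← exp_zero]; ring_nf
  rw [mul_rpow (exp_pos _).le ha, mul_rpow (exp_pos _).le hb, ← exp_mul, ← exp_mul] at hamgm
  linear_combination hamgm - a ^ s * b ^ (1 - s) * hexp

lemma exp_mul_add_eq_rpow_mul_rpow {a b : ℝ} (ha : 0 < a) (hb : 0 < b) (s : ℝ) :
    s * (exp ((s - 1) * (log a - log b)) * a) + (1 - s) * (exp (s * (log a - log b)) * b) =
      a ^ s * b ^ (1 - s) := by
  have hGM : a ^ s * b ^ (1 - s) = exp (log a * s + log b * (1 - s)) := by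
    rw [rpow_def_of_pos ha, rpow_def_of_pos hb, exp_add]
  have h₁ : exp ((s - 1) * (log a - log b)) * a = exp (log a * s + log b * (1 - s)) := by
    rw [show log a * s + log b * (1 - s) = (s - 1) * (log a - log b) + log a by ring, exp_add,
      exp_log ha]
  have h₂ : exp (s * (log a - log b)) * b = exp (log a * s + log b * (1 - s)) := by
    rw [show log a * s + log b * (1 - s) = s * (log a - log b) + log b by ring, exp_add,
      exp_log hb]
  rw [h₁, h₂, hGM]; ring

/-- As a function of a real parameter, the bound in `h` has infimum `a ^ s * b ^ (1 - s)`,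
attained at `log a - log b` when `a, b > 0`; the boundary cases follow by perturbing `a` and `b`. -/
lemma le_rpow_mul_rpow_of_forall_rat_le {a b s y : ℝ} (ha : 0 ≤ a) (hb : 0 ≤ b) (hs0 : 0 ≤ s)
    (hs1 : s ≤ 1)
    (h : ∀ q : ℚ, y ≤ s * (exp ((s - 1) * q) * a) + (1 - s) * (exp (s * q) * b)) :
    y ≤ a ^ s * b ^ (1 - s) := by
  have hreal (v : ℝ) : y ≤ s * (exp ((s - 1) * v) * a) + (1 - s) * (exp (s * v) * b) :=
    Rat.denseRange_cast.induction_on v (isClosed_le continuous_const (by fun_prop)) h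
  have hperturb : ∀ ε > 0, y ≤ (a + ε) ^ s * (b + ε) ^ (1 - s) := by
    intro ε hε
    rw [← exp_mul_add_eq_rpow_mul_rpow (by positivity) (by positivity)]
    refine (hreal (log (a + ε) - log (b + ε))).trans ?_
    gcongr <;> linarith
  have hcont : ContinuousAt (fun ε : ℝ => (a + ε) ^ s * (b + ε) ^ (1 - s)) 0 :=
    ((continuousAt_const.add continuousAt_id).rpow_const (Or.inr hs0)).mul
      ((continuousAt_const.add continuousAt_id).rpow_const (Or.inr (sub_nonneg.2 hs1)))
  refine ge_of_tendsto (x := 𝓝[>] (0 : ℝ)) ?_ (eventually_nhdsWithin_of_forall hperturb)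
  simpa using hcont.tendsto.mono_left nhdsWithin_le_nhds

lemma exists_rpow_mul_half_rpow_le {C : ℝ} (hC : 0 < C) :
    ∃ s : ℝ, 0 < s ∧ s < 1 ∧ C ^ s * (1 / 2) ^ (1 - s) ≤ 3 / 4 := by
  have hcont : ContinuousAt (fun s : ℝ => C ^ s * (1 / 2 : ℝ) ^ (1 - s)) 0 :=
    (continuousAt_const_rpow hC.ne').mul
      ((continuousAt_const_rpow (by norm_num)).comp (continuousAt_const.sub continuousAt_id))
  have hlim : Tendsto (fun s : ℝ => C ^ s * (1 / 2 : ℝ) ^ (1 - s)) (𝓝[>] 0) (𝓝 (1 / 2)) := by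
    simpa using hcont.tendsto.mono_left nhdsWithin_le_nhds
  obtain ⟨s, hs, hs'⟩ :=
    ((hlim.eventually (ge_mem_nhds (by norm_num : (1 / 2 : ℝ) < 3 / 4))).and
      (Ioo_mem_nhdsGT zero_lt_one)).exists
  exact ⟨s, hs'.1, hs'.2, hs⟩

lemma le_mul_four_rpow_mul_of_le_rpow_mul_rpow_add {s C w x e M : ℝ} (hs0 : 0 < s)
    (hs1 : s ≤ 1) (hC0 : 0 ≤ C) (hCs : C ^ s * (1 / 2) ^ (1 - s) ≤ 3 / 4) (hw0 : 0 ≤ w)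
    (hx0 : 0 ≤ x) (he0 : 0 ≤ e) (hM : 0 ≤ M) (hwx : w ≤ C * x ^ (1 / s)) (he : e ≤ 1 / 2)
    (hx : x ≤ w ^ s * e ^ (1 - s) + M ^ s) :
    w ≤ C * 4 ^ (1 / s) * M := by
  have hws : w ^ s ≤ C ^ s * x := by
    calc w ^ s ≤ (C * x ^ (1 / s)) ^ s := rpow_le_rpow hw0 hwx hs0.le
      _ = C ^ s * x := by
        rw [mul_rpow hC0 (rpow_nonneg hx0 _), ← rpow_mul hx0, one_div_mul_cancel hs0.ne',
          rpow_one]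
  have hes : e ^ (1 - s) ≤ (1 / 2) ^ (1 - s) := rpow_le_rpow he0 he (sub_nonneg.2 hs1)
  have hx4 : x ≤ 4 * M ^ s := by
    have := mul_le_mul hws hes (rpow_nonneg he0 _) (by positivity)
    nlinarith
  calc w ≤ C * x ^ (1 / s) := hwx
    _ ≤ C * (4 * M ^ s) ^ (1 / s) := by gcongr
    _ = C * 4 ^ (1 / s) * M := by
      rw [mul_rpow (by norm_num) (rpow_nonneg hM _), ← rpow_mul hM, mul_one_div_cancel hs0.ne',
        rpow_one, mul_assoc]

variable {Ω : Type*} {m m0 : MeasurableSpace Ω} {μ : Measure Ω}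

lemma MeasureTheory.Integrable.rpow_mul_rpow {f g : Ω → ℝ} (hf : Integrable f μ)
    (hg : Integrable g μ) (hf0 : 0 ≤ᵐ[μ] f) (hg0 : 0 ≤ᵐ[μ] g) {s : ℝ} (hs0 : 0 ≤ s) (hs1 : s ≤ 1) :
    Integrable (fun x => f x ^ s * g x ^ (1 - s)) μ := by
  refine Integrable.mono' ((hf.const_mul s).add (hg.const_mul (1 - s)))
    ((hf.aemeasurable.pow_const s).mul (hg.aemeasurable.pow_const _)).aestronglyMeasurable ?_
  filter_upwards [hf0, hg0] with x hfx hgx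
  rw [Real.norm_of_nonneg (mul_nonneg (rpow_nonneg hfx s) (rpow_nonneg hgx _))]
  exact geom_mean_le_arith_mean2_weighted hs0 (sub_nonneg.2 hs1) hfx hgx (add_sub_cancel s 1)

lemma MeasureTheory.Integrable.rpow_of_le_one [IsFiniteMeasure μ] {f : Ω → ℝ}
    (hf : Integrable f μ) (hf0 : 0 ≤ᵐ[μ] f) {s : ℝ} (hs0 : 0 ≤ s) (hs1 : s ≤ 1) :
    Integrable (fun x => f x ^ s) μ := by
  simpa using
    hf.rpow_mul_rpow (integrable_const 1) hf0 (ae_of_all _ fun _ => zero_le_one) hs0 hs1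

lemma condExp_const_mul (c : ℝ) (f : Ω → ℝ) :
    μ[fun x => c * f x | m] =ᵐ[μ] fun x => c * μ[f|m] x := by
  simpa [Pi.smul_def, smul_eq_mul] using condExp_smul (μ := μ) c f m

lemma condExp_const_mul_add_const_mul {f g : Ω → ℝ} (hf : Integrable f μ) (hg : Integrable g μ)
    (a b : ℝ) :
    μ[fun x => a * f x + b * g x | m] =ᵐ[μ] fun x => a * μ[f|m] x + b * μ[g|m] x := by
  filter_upwards [condExp_const_mul (μ := μ) (m := m) a f,
    condExp_const_mul (μ := μ) (m := m) b g, condExp_add (hf.const_mul a) (hg.const_mul b) m]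
    with x hfx hgx hx
  rw [← hfx, ← hgx]
  exact hx

/-- Conditional Hölder inequality: the weighted AM-GM bound holds a.e. simultaneously for
countably many parameters, and the infimum over them is then taken pointwise. -/
lemma condExp_rpow_mul_rpow_le {f g : Ω → ℝ} (hf : Integrable f μ) (hg : Integrable g μ)
    (hf0 : 0 ≤ᵐ[μ] f) (hg0 : 0 ≤ᵐ[μ] g) {s : ℝ} (hs0 : 0 ≤ s) (hs1 : s ≤ 1) :
    μ[fun x => f x ^ s * g x ^ (1 - s) | m] ≤ᵐ[μ]
      fun x => μ[f|m] x ^ s * μ[g|m] x ^ (1 - s) := by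
  have hbound (q : ℚ) : ∀ᵐ x ∂μ, μ[fun x => f x ^ s * g x ^ (1 - s) | m] x ≤
      s * (exp ((s - 1) * q) * μ[f|m] x) + (1 - s) * (exp (s * q) * μ[g|m] x) := by
    have hmono : μ[fun x => f x ^ s * g x ^ (1 - s) | m] ≤ᵐ[μ]
        μ[fun x => s * (exp ((s - 1) * q) * f x) + (1 - s) * (exp (s * q) * g x) | m] :=
      condExp_mono (hf.rpow_mul_rpow hg hf0 hg0 hs0 hs1)
      ((hf.const_mul _).const_mul s |>.add ((hg.const_mul _).const_mul (1 - s)))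
      (by filter_upwards [hf0, hg0] with x hfx hgx
          using rpow_mul_rpow_le_exp_mul_add hfx hgx hs0 hs1 q)
    filter_upwards [hmono, condExp_const_mul_add_const_mul (m := m) (hf.const_mul _)
      (hg.const_mul _) s (1 - s), condExp_const_mul (μ := μ) (m := m) (exp ((s - 1) * q)) f,
      condExp_const_mul (μ := μ) (m := m) (exp (s * q)) g] with x hx hlin hfx hgx
    rwa [hlin, hfx, hgx] at hx
  filter_upwards [ae_all_iff.2 hbound, condExp_nonneg (m := m) hf0,
    condExp_nonneg (m := m) hg0] with x hx hF hG
  exact le_rpow_mul_rpow_of_forall_rat_le hF hG hs0 hs1 hx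

lemma condExp_indicator_rpow_le [IsFiniteMeasure μ] {f : Ω → ℝ} {S : Set Ω}
    (hf : Integrable f μ) (hf0 : 0 ≤ᵐ[μ] f) (hS : MeasurableSet S) {s : ℝ} (hs0 : 0 ≤ s)
    (hs1 : s < 1) :
    μ[S.indicator (fun x => f x ^ s) | m] ≤ᵐ[μ]
      fun x => μ[f|m] x ^ s * μ[S.indicator (fun _ => (1 : ℝ)) | m] x ^ (1 - s) := by
  have hind : S.indicator (fun x => f x ^ s) =
      fun x => f x ^ s * S.indicator (fun _ => (1 : ℝ)) x ^ (1 - s) := by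
    ext x
    by_cases hx : x ∈ S <;> simp [hx, (sub_pos.2 hs1).ne']
  rw [hind]
  exact condExp_rpow_mul_rpow_le hf ((integrable_const 1).indicator hS) hf0
    (ae_of_all _ (indicator_nonneg fun _ _ => zero_le_one)) hs0 hs1.le

/-- `g` need not be integrable, so the comparison is made on the `m`-measurable sets
`{|g| ≤ k}`. -/
lemma condExp_ae_le_of_ae_le_stronglyMeasurable [IsFiniteMeasure μ] (hm : m ≤ m0)
    {f g : Ω → ℝ} (hf : Integrable f μ) (hg : StronglyMeasurable[m] g) (hfg : f ≤ᵐ[μ] g) :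
    μ[f|m] ≤ᵐ[μ] g := by
  have hbounded (k : ℕ) : ∀ᵐ x ∂μ, |g x| ≤ k → μ[f|m] x ≤ g x := by
    set A := {x | |g x| ≤ k}
    have hA : MeasurableSet[m] A :=
      (continuous_abs.measurable.comp hg.measurable) measurableSet_Iic
    have hgA : Integrable (A.indicator g) μ := by
      refine .of_bound ((hg.indicator hA).mono hm).aestronglyMeasurable k
        (ae_of_all _ fun x => ?_)
      rw [norm_indicator_eq_indicator_norm]
      exact indicator_apply_le' id fun _ => Nat.cast_nonneg k
    have hmono := condExp_mono (m := m) (hf.indicator (hm _ hA)) hgA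
      (by filter_upwards [hfg] with x hx using indicator_le_indicator hx)
    rw [condExp_of_stronglyMeasurable hm (hg.indicator hA) hgA] at hmono
    filter_upwards [hmono, condExp_indicator hf hA] with x hle heq hx
    simpa [heq, indicator_of_mem (show x ∈ A from hx)] using hle
  filter_upwards [ae_all_iff.2 hbounded] with x hx using hx ⌈|g x|⌉₊ (Nat.le_ceil _)

lemma ae_pos_of_condExp_indicator_lt_one [IsFiniteMeasure μ] (hm : m ≤ m0) {ω M : Ω → ℝ}
    (hω : Measurable ω) (hpos : ∀ᵐ x ∂μ, 0 < ω x) (hM : StronglyMeasurable[m] M)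
    (hlt : ∀ᵐ x ∂μ, μ[{y | M y < ω y}.indicator (fun _ => (1 : ℝ)) | m] x < 1) :
    ∀ᵐ x ∂μ, 0 < M x := by
  set B := {x | M x ≤ 0}
  have hB : MeasurableSet[m] B := hM.measurable measurableSet_Iic
  have hBint : Integrable (B.indicator fun _ => (1 : ℝ)) μ :=
    (integrable_const 1).indicator (hm _ hB)
  have hmono := condExp_mono (m := m) hBint
    ((integrable_const 1).indicator (measurableSet_lt (hM.measurable.mono hm le_rfl) hω))
    (by
      filter_upwards [hpos] with x hx
      by_cases hxB : x ∈ B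
      · simp [hxB, show M x < ω x from lt_of_le_of_lt hxB hx]
      · simp [hxB, indicator_nonneg])
  rw [condExp_of_stronglyMeasurable hm (stronglyMeasurable_const.indicator hB) hBint] at hmono
  filter_upwards [hmono, hlt] with x hle hlt
  by_contra hx
  rw [indicator_of_mem (show x ∈ B from not_lt.1 hx)] at hle
  linarith

lemma condExp_rpow_le_rpow_mul_rpow_add_rpow [IsFiniteMeasure μ] (hm : m ≤ m0) {f M : Ω → ℝ}
    (hf : Integrable f μ) (hfm : Measurable f) (hf0 : 0 ≤ᵐ[μ] f) (hM : StronglyMeasurable[m] M)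
    (hM0 : ∀ᵐ x ∂μ, 0 < M x) {s : ℝ} (hs0 : 0 ≤ s) (hs1 : s < 1) :
    μ[fun x => f x ^ s | m] ≤ᵐ[μ] fun x =>
      μ[f|m] x ^ s * μ[{y | M y < f y}.indicator (fun _ => (1 : ℝ)) | m] x ^ (1 - s) +
        M x ^ s := by
  set S := {y | M y < f y}
  have hS : MeasurableSet S := measurableSet_lt (hM.measurable.mono hm le_rfl) hfm
  have hfs := hf.rpow_of_le_one hf0 hs0 hs1.le
  have hsplit := condExp_add (hfs.indicator hS) (hfs.indicator hS.compl) m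
  rw [indicator_self_add_compl] at hsplit
  have hoff := condExp_ae_le_of_ae_le_stronglyMeasurable hm (hfs.indicator hS.compl)
    (hM.measurable.pow_const s).stronglyMeasurable <| by
      filter_upwards [hM0, hf0] with x hMx hfx
      exact indicator_apply_le' (fun hxS => rpow_le_rpow hfx (not_lt.1 hxS) hs0)
        fun _ => (rpow_pos_of_pos hMx s).le
  filter_upwards [hsplit, condExp_indicator_rpow_le hf hf0 hS hs0 hs1, hoff] with x hx hon hoff
  rw [hx, Pi.add_apply]
  exact add_le_add hon hoff

end

theorem stmt15_general {Ω : Type*} {m0 : MeasurableSpace Ω} {μ : Measure Ω} [IsProbabilityMeasure μ]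
    (ℱ : Filtration ℕ m0)
    {ω : Ω → ℝ} (hω : Measurable ω) (hpos : ∀ x, 0 < ω x) (hint : Integrable ω μ)
    (m : ℕ → Ω → ℝ)
    (hmeas : ∀ n, StronglyMeasurable[ℱ n] (m n))
    (hmed1 : ∀ n, ∀ᵐ x ∂μ,
      (μ[Set.indicator {y | m n y < ω y} (fun _ => (1 : ℝ)) | ℱ n]) x ≤ 1 / 2)
    (hSW : ∃ C > 1, ∀ s : ℝ, 0 < s → s < 1 → ∀ n : ℕ,
      ∀ᵐ x ∂μ, (μ[ω | ℱ n]) x ≤ C * ((μ[fun y => ω y ^ s | ℱ n]) x) ^ (1 / s)) :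
    ∃ C' > 1, ∀ n : ℕ, ∀ᵐ x ∂μ, (μ[ω | ℱ n]) x ≤ C' * m n x := by
  obtain ⟨C, hC, hSW⟩ := hSW
  obtain ⟨s, hs0, hs1, hCs⟩ := exists_rpow_mul_half_rpow_le (zero_lt_one.trans hC)
  refine ⟨C * 4 ^ (1 / s),
    one_lt_mul_of_lt_of_le hC (Real.one_le_rpow (by norm_num) (by positivity)), fun n => ?_⟩
  have hω0 : 0 ≤ᵐ[μ] ω := ae_of_all _ fun x => (hpos x).le
  have hmpos := ae_pos_of_condExp_indicator_lt_one (ℱ.le n) hω (ae_of_all _ hpos) (hmeas n)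
    (by filter_upwards [hmed1 n] with x hx using hx.trans_lt (by norm_num))
  have hsplit := condExp_rpow_le_rpow_mul_rpow_add_rpow (ℱ.le n) hint hω hω0 (hmeas n) hmpos
    hs0.le hs1
  have hW0 := condExp_nonneg (m := ℱ n) hω0
  have hX0 := condExp_nonneg (m := ℱ n) (ae_of_all μ fun x => Real.rpow_nonneg (hpos x).le s)
  have hE0 : 0 ≤ᵐ[μ] μ[{y | m n y < ω y}.indicator (fun _ => (1 : ℝ)) | ℱ n] :=
    condExp_nonneg (ae_of_all _ (Set.indicator_nonneg fun _ _ => zero_le_one))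
  filter_upwards [hSW s hs0 hs1 n, hmed1 n, hmpos, hsplit, hW0, hX0, hE0]
    with x hWX hE hmx hX hW0 hX0 hE0
  exact le_mul_four_rpow_mul_of_le_rpow_mul_rpow_add hs0 hs1.le (by linarith) hCs hW0 hX0 hE0
    hmx.le hWX hE hX

theorem stmt15 {Ω : Type*} {m0 : MeasurableSpace Ω} {μ : Measure Ω} [IsProbabilityMeasure μ]
    (ℱ : Filtration ℕ m0)
    {ω : Ω → ℝ} (hω : Measurable ω) (hpos : ∀ x, 0 < ω x) (hint : Integrable ω μ)
    (m : ℕ → Ω → ℝ)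
    (hmeas : ∀ n, StronglyMeasurable[ℱ n] (m n))
    (hmed1 : ∀ n, ∀ᵐ x ∂μ,
      (μ[Set.indicator {y | m n y < ω y} (fun _ => (1 : ℝ)) | ℱ n]) x ≤ 1 / 2)
    (hmed2 : ∀ n, ∀ᵐ x ∂μ,
      (μ[Set.indicator {y | ω y < m n y} (fun _ => (1 : ℝ)) | ℱ n]) x ≤ 1 / 2)
    (hSW : ∃ C > 1, ∀ s : ℝ, 0 < s → s < 1 → ∀ n : ℕ,
      ∀ᵐ x ∂μ, (μ[ω | ℱ n]) x ≤ C * ((μ[fun y => ω y ^ s | ℱ n]) x) ^ (1 / s)) :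
    ∃ C' > 1, ∀ n : ℕ, ∀ᵐ x ∂μ, (μ[ω | ℱ n]) x ≤ C' * m n x :=
  stmt15_general ℱ hω hpos hint m hmeas hmed1 hSW
end

section
/- Let (Ω, F, μ) be a probability space with filtration (F_n), and f ∈ L¹(μ). Define the tailed maximal operator M*_n(f) = sup_{m ≥ n} |E(f | F_m)|. Then for every λ > 0, every n, and every B ∈ F_n, one has μ(B ∩ {M*_n(f) > λ}) ≤ (2/λ) ∫_{B ∩ {|f| > λ/2}} |f| dμ. -/
/-!
Split `f` on `B` into its large part `g = f · 1_{B ∩ {|f| > λ/2}}` and a remainder bounded by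
`λ/2`. Since `B ∈ ℱ n`, for `m ≥ n` we have `E(f | ℱ m) = E(f 1_B | ℱ m)` on `B`, and the
remainder contributes at most `λ/2` there, so `M*_n f > λ` on `B` forces `|E(g | ℱ m)| > λ/2`
for some `m`. Doob's maximal inequality for the martingale `E(g | ℱ m)`, taken over all `m`
(so the filtration need not be shifted), bounds the measure of that event by `(2/λ) ‖g‖₁`.
-/

open MeasureTheory

section

variable {Ω : Type*} {m0 : MeasurableSpace Ω} {μ : Measure Ω}

theorem MeasureTheory.Martingale.submartingale_abs {ℱ : Filtration ℕ m0} {f : ℕ → Ω → ℝ}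
    (hf : Martingale f ℱ μ) : Submartingale (fun n ω => |f n ω|) ℱ μ :=
  hf.submartingale.sup hf.neg.submartingale

theorem measure_exists_lt_abs_condExp_le [IsFiniteMeasure μ] (ℱ : Filtration ℕ m0)
    (g : Ω → ℝ) {ε : ℝ} (hε : 0 < ε) :
    μ {x | ∃ m, ε < |μ[g | ℱ m] x|} ≤ ENNReal.ofReal (ε⁻¹ * ∫ x, |g x| ∂μ) := by
  set M : ℕ → Set Ω := fun N => {x | ε ≤ (Finset.range (N + 1)).sup'
    Finset.nonempty_range_add_one fun k => |μ[g | ℱ k] x|}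
  have hM_mono : Monotone M := fun i j hij x (hx : ε ≤ _) =>
    show ε ≤ _ from hx.trans (Finset.sup'_mono _ (Finset.range_subset_range.2 (by omega)) _)
  have hM : ∀ N, μ (M N) ≤ ENNReal.ofReal (ε⁻¹ * ∫ x, |g x| ∂μ) := by
    intro N
    have doob := maximal_ineq (martingale_condExp g ℱ μ).submartingale_abs
      (fun _ _ => abs_nonneg _) (ε := ε.toNNReal) N
    rw [Real.coe_toNNReal _ hε.le] at doob
    have hL1 : ∫ x in M N, |μ[g | ℱ N] x| ∂μ ≤ ∫ x, |g x| ∂μ :=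
      (setIntegral_le_integral integrable_condExp.abs
        (Filter.Eventually.of_forall fun _ => abs_nonneg _)).trans (integral_abs_condExp_le g)
    calc μ (M N) = ENNReal.ofReal ε⁻¹ * (ENNReal.ofReal ε * μ (M N)) := by
          rw [← mul_assoc, ← ENNReal.ofReal_mul (inv_nonneg.2 hε.le), inv_mul_cancel₀ hε.ne',
            ENNReal.ofReal_one, one_mul]
      _ ≤ ENNReal.ofReal ε⁻¹ * ENNReal.ofReal (∫ x, |g x| ∂μ) :=
          mul_le_mul_right (doob.trans (ENNReal.ofReal_le_ofReal hL1)) _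
      _ = ENNReal.ofReal (ε⁻¹ * ∫ x, |g x| ∂μ) :=
          (ENNReal.ofReal_mul (inv_nonneg.2 hε.le)).symm
  have hsub : {x | ∃ m, ε < |μ[g | ℱ m] x|} ⊆ ⋃ N, M N := by
    rintro x ⟨m, hm⟩
    exact Set.mem_iUnion.2 ⟨m, hm.le.trans (Finset.le_sup' (fun k => |μ[g | ℱ k] x|)
      (Finset.self_mem_range_succ m))⟩
  calc μ {x | ∃ m, ε < |μ[g | ℱ m] x|} ≤ μ (⋃ N, M N) := measure_mono hsub
    _ = ⨆ N, μ (M N) := hM_mono.measure_iUnion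
    _ ≤ _ := iSup_le hM

theorem ae_abs_condExp_le_abs_condExp_add {m : MeasurableSpace Ω}
    (hm : m ≤ m0) {f g : Ω → ℝ} (hf : Integrable f μ) (hg : Integrable g μ) {B : Set Ω}
    (hB : MeasurableSet[m] B) {c : ℝ} (hfg : ∀ x, |B.indicator f x - g x| ≤ c) :
    ∀ᵐ x ∂μ, x ∈ B → |μ[f | m] x| ≤ |μ[g | m] x| + c := by
  have hloc := condExp_indicator (m := m) hf hB
  have hsplit : μ[B.indicator f | m] =ᵐ[μ] μ[g | m] + μ[B.indicator f - g | m] := by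
    conv_lhs => rw [← add_sub_cancel g (B.indicator f)]
    exact condExp_add hg ((hf.indicator (hm B hB)).sub hg) m
  have hrem := ae_bdd_abs_condExp_of_ae_bdd_abs (m := m) (μ := μ) (f := B.indicator f - g)
    (Filter.Eventually.of_forall hfg)
  filter_upwards [hloc, hsplit, hrem] with x hloc hsplit hrem hx
  rw [Set.indicator_of_mem hx] at hloc
  calc |μ[f | m] x| = |μ[g | m] x + μ[B.indicator f - g | m] x| := by
        rw [← hloc, hsplit, Pi.add_apply]
    _ ≤ |μ[g | m] x| + c := (abs_add_le _ _).trans (by linarith)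

theorem abs_indicator_sub_indicator_inter_lt_abs_le (f : Ω → ℝ) (B : Set Ω) {c : ℝ}
    (hc : 0 ≤ c) (x : Ω) :
    |B.indicator f x - (B ∩ {x | c < |f x|}).indicator f x| ≤ c := by
  by_cases hxB : x ∈ B
  · by_cases hfx : c < |f x|
    · simp [hxB, hfx, hc]
    · simpa [hxB, hfx] using not_lt.1 hfx
  · simp [hxB, hc]

end

theorem stmt17 {Ω : Type*} {m0 : MeasurableSpace Ω} {μ : Measure Ω} [IsProbabilityMeasure μ]
    (ℱ : Filtration ℕ m0)
    {f : Ω → ℝ} (hf : Integrable f μ)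
    (n : ℕ) {B : Set Ω} (hB : MeasurableSet[ℱ n] B)
    {lam : ℝ} (hlam : 0 < lam) :
    μ (B ∩ {x | lam < ⨆ m : {m : ℕ // n ≤ m}, |(μ[f | ℱ (m : ℕ)]) x|}) ≤
      ENNReal.ofReal ((2 / lam) * ∫ x in B ∩ {x | lam / 2 < |f x|}, |f x| ∂μ) := by
  set S := B ∩ {x | lam / 2 < |f x|}
  have hS : NullMeasurableSet S μ := (ℱ.le n B hB).nullMeasurableSet.inter
    (nullMeasurableSet_lt aemeasurable_const hf.1.aemeasurable.abs)
  have hlocal : ∀ᵐ x ∂μ, ∀ m : {m : ℕ // n ≤ m},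
      x ∈ B → |μ[f | ℱ m] x| ≤ |μ[S.indicator f | ℱ m] x| + lam / 2 :=
    ae_all_iff.2 fun m => ae_abs_condExp_le_abs_condExp_add (ℱ.le m) hf (hf.indicator₀ hS)
      (ℱ.mono m.2 B hB) (abs_indicator_sub_indicator_inter_lt_abs_le f B (by positivity))
  have : Nonempty {m : ℕ // n ≤ m} := ⟨⟨n, le_rfl⟩⟩
  calc μ (B ∩ {x | lam < ⨆ m : {m : ℕ // n ≤ m}, |(μ[f | ℱ (m : ℕ)]) x|})
      ≤ μ {x | ∃ m, lam / 2 < |μ[S.indicator f | ℱ m] x|} := by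
        refine measure_mono_ae ?_
        filter_upwards [hlocal] with x hx ⟨hxB, (hlt : lam < _)⟩
        obtain ⟨m, hm⟩ := exists_lt_of_lt_ciSup hlt
        exact ⟨m, by linarith [hx m hxB]⟩
    _ ≤ ENNReal.ofReal ((lam / 2)⁻¹ * ∫ x, |S.indicator f x| ∂μ) :=
        measure_exists_lt_abs_condExp_le ℱ _ (by positivity)
    _ = _ := by
        simp_rw [inv_div, ← integral_indicator₀ hS, ← Real.norm_eq_abs,
          norm_indicator_eq_indicator_norm]
end

section
/- Let (Ω, F, μ) be a probability space with filtration (F_n) and ω > 0 an integrable weight with ω_n := E(ω | F_n). If ω satisfies A^{SW}_∞ (there is C > 1 with ω_n ≤ C E(ω^s | F_n)^{1/s} a.e. for all s ∈ (0,1) and all n), then there exists C' > 0 such that E(M*_n(ω) | F_n) ≤ C' ω_n a.e. for all n, where M*_n(ω) = sup_{m ≥ n} E(ω | F_m). -/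
open MeasureTheory

/-! Taking `s = 1/2` in `A^SW` gives `ω_m ≤ C E(√ω | F_m)²`, so `M*_n(ω)` is dominated by `C` times
the square of the maximal function of the martingale `E(√ω | F_m)`, `m ≥ n`. Doob's `L²` maximal
inequality, applied on each set `A ∈ F_n`, bounds the integral of that square over `A` by
`16 ∫_A E(√ω | F_m)² ≤ 16 ∫_A ω` (conditional Jensen). Monotone convergence over the finite maxima
then gives `∫_A M*_n(ω) ≤ 16 C ∫_A ω` for all `A ∈ F_n`, which is `E(M*_n(ω) | F_n) ≤ 16 C ω_n`. -/

theorem sq_partialSups_add_le_mul (y : ℕ → ℝ) (hy : ∀ k, 0 ≤ y k) (N : ℕ) :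
    partialSups y N ^ 2 + 4 * ∑ k ∈ Finset.range N, partialSups y k * (y (k + 1) - y k) ≤
      4 * partialSups y N * y N := by
  induction N with
  | zero => simp only [partialSups_zero, Finset.range_zero, Finset.sum_empty]; nlinarith [hy 0]
  | succ N ih =>
    have hyT : y N ≤ partialSups y N := le_partialSups y N
    rw [Finset.sum_range_succ, partialSups_add_one]
    rcases le_total (y (N + 1)) (partialSups y N) with h | h
    · rw [max_eq_left h]; nlinarith
    · rw [max_eq_right h]
      nlinarith [mul_nonneg (sub_nonneg.2 h) (sub_nonneg.2 h),
        mul_nonneg (sub_nonneg.2 h) ((hy N).trans hyT), hy (N + 1)]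

-- A pathwise Doob inequality: when `y` is a martingale, the sum integrates to zero.
theorem sq_partialSups_add_le_sq (y : ℕ → ℝ) (hy : ∀ k, 0 ≤ y k) (N : ℕ) :
    partialSups y N ^ 2 + 8 * ∑ k ∈ Finset.range N, partialSups y k * (y (k + 1) - y k) ≤
      16 * y N ^ 2 := by
  nlinarith [sq_partialSups_add_le_mul y hy N, sq_nonneg (partialSups y N - 4 * y N)]

theorem ENNReal.ofReal_iSup_le {ι : Sort*} [Nonempty ι] (f : ι → ℝ) :
    ENNReal.ofReal (⨆ i, f i) ≤ ⨆ i, ENNReal.ofReal (f i) := by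
  by_cases hf : BddAbove (Set.range f)
  · exact (Monotone.map_ciSup_of_continuousAt ENNReal.continuous_ofReal.continuousAt
      ENNReal.ofReal_mono hf).le
  · simp [Real.iSup_of_not_bddAbove hf]

theorem iSup_subtype_le_eq_iSup_add {α : Type*} [SupSet α] (g : ℕ → α) (n : ℕ) :
    ⨆ m : {m : ℕ // n ≤ m}, g m = ⨆ k, g (n + k) := by
  refine (Function.Surjective.iSup_comp (f := fun k => (⟨n + k, Nat.le_add_right n k⟩ :
    {m // n ≤ m})) ?_ (fun m => g m)).symm
  rintro ⟨m, hm⟩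
  exact ⟨m - n, Subtype.ext (by simp only; omega)⟩

namespace MeasureTheory

variable {Ω : Type*} {m m0 : MeasurableSpace Ω} {μ : Measure Ω}

def Filtration.shift (ℱ : Filtration ℕ m0) (n : ℕ) : Filtration ℕ m0 where
  seq k := ℱ (n + k)
  mono' _ _ h := ℱ.mono (Nat.add_le_add_left h n)
  le' k := ℱ.le (n + k)

theorem MemLp.partialSups {E : Type*} [NormedAddCommGroup E] [Lattice E] [HasSolidNorm E]
    [IsOrderedAddMonoid E] {p : ENNReal} {f : ℕ → Ω → E} (hf : ∀ k, MemLp (f k) p μ) (N : ℕ) :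
    MemLp (_root_.partialSups f N) p μ := by
  induction N with
  | zero => simpa using hf 0
  | succ N ih => rw [partialSups_add_one]; exact ih.sup (hf _)

theorem Integrable.partialSups {f : ℕ → Ω → ℝ} (hf : ∀ k, Integrable (f k) μ) (N : ℕ) :
    Integrable (_root_.partialSups f N) μ :=
  memLp_one_iff_integrable.1 (MemLp.partialSups (fun k => memLp_one_iff_integrable.2 (hf k)) N)

theorem StronglyAdapted.partialSups {β : Type*} [TopologicalSpace β] [SemilatticeSup β]
    [ContinuousSup β] {ℱ : Filtration ℕ m0} {f : ℕ → Ω → β} (hf : StronglyAdapted ℱ f) :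
    StronglyAdapted ℱ (_root_.partialSups f) := by
  intro N
  induction N with
  | zero => simpa using hf 0
  | succ N ih =>
    rw [partialSups_add_one]
    exact @StronglyMeasurable.sup _ _ _ _ (ℱ (N + 1)) _ _ _ (ih.mono (ℱ.mono N.le_succ)) (hf _)

theorem sq_condExp_ae_le_condExp_sq (hm : m ≤ m0) [IsFiniteMeasure μ] {X : Ω → ℝ}
    (hX : MemLp X 2 μ) : μ[X | m] ^ 2 ≤ᵐ[μ] μ[X ^ 2 | m] := by
  have hvar : 0 ≤ᵐ[μ] ProbabilityTheory.condVar m X μ :=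
    condExp_nonneg (ae_of_all _ fun _ => sq_nonneg _)
  filter_upwards [ProbabilityTheory.condVar_ae_eq_condExp_sq_sub_sq_condExp hm hX, hvar]
    with x hx hx0
  simp only [hx, Pi.sub_apply, Pi.zero_apply, sub_nonneg] at hx0
  exact hx0

theorem setIntegral_sq_condExp_le (hm : m ≤ m0) [IsFiniteMeasure μ] {X : Ω → ℝ}
    (hX : MemLp X 2 μ) {A : Set Ω} (hA : MeasurableSet[m] A) :
    ∫ x in A, (μ[X | m]) x ^ 2 ∂μ ≤ ∫ x in A, X x ^ 2 ∂μ :=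
  calc ∫ x in A, (μ[X | m]) x ^ 2 ∂μ ≤ ∫ x in A, (μ[X ^ 2 | m]) x ∂μ :=
        setIntegral_mono_ae (hX.condExp one_le_two).integrable_sq.integrableOn
          integrable_condExp.integrableOn (sq_condExp_ae_le_condExp_sq hm hX)
    _ = ∫ x in A, X x ^ 2 ∂μ := setIntegral_condExp hm hX.integrable_sq hA

theorem condExp_ae_le_of_forall_setIntegral_le (hm : m ≤ m0) [SigmaFinite (μ.trim hm)]
    {f g : Ω → ℝ} (hf : Integrable f μ) (hg : Integrable g μ)
    (hfg : ∀ s, MeasurableSet[m] s → ∫ x in s, f x ∂μ ≤ ∫ x in s, g x ∂μ) :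
    μ[f | m] ≤ᵐ[μ] μ[g | m] := by
  refine ae_le_of_ae_le_trim (hm := hm) (ae_le_of_forall_setIntegral_le
    (integrable_condExp.trim hm stronglyMeasurable_condExp)
    (integrable_condExp.trim hm stronglyMeasurable_condExp) fun s hs _ => ?_)
  rw [← setIntegral_trim hm stronglyMeasurable_condExp hs,
    ← setIntegral_trim hm stronglyMeasurable_condExp hs,
    setIntegral_condExp hm hf hs, setIntegral_condExp hm hg hs]
  exact hfg s hs

theorem Martingale.setIntegral_mul_eq {ι : Type*} [Preorder ι] {ℱ : Filtration ι m0}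
    [SigmaFiniteFiltration μ ℱ] {Y : ι → Ω → ℝ} (hY : Martingale Y ℱ μ) {i j : ι} (hij : i ≤ j)
    {f : Ω → ℝ} (hf : StronglyMeasurable[ℱ i] f) (hfY : Integrable (fun x => f x * Y j x) μ)
    {A : Set Ω} (hA : MeasurableSet[ℱ i] A) :
    ∫ x in A, f x * Y j x ∂μ = ∫ x in A, f x * Y i x ∂μ := by
  rw [← setIntegral_condExp (ℱ.le i) hfY hA]
  refine setIntegral_congr_ae (ℱ.le i A hA) ?_
  filter_upwards [condExp_mul_of_stronglyMeasurable_left hf hfY (hY.integrable j),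
    hY.condExp_ae_eq hij] with x hx hxY _
  exact hx.trans (by rw [Pi.mul_apply, hxY])

theorem Martingale.setIntegral_sq_partialSups_le {ℱ : Filtration ℕ m0}
    [SigmaFiniteFiltration μ ℱ] {Y : ℕ → Ω → ℝ} (hY : Martingale Y ℱ μ) (hnn : ∀ k, 0 ≤ᵐ[μ] Y k)
    (hL2 : ∀ k, MemLp (Y k) 2 μ) {A : Set Ω} (hA : MeasurableSet[ℱ 0] A) (N : ℕ) :
    ∫ x in A, partialSups Y N x ^ 2 ∂μ ≤ 16 * ∫ x in A, Y N x ^ 2 ∂μ := by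
  set T := partialSups Y
  have hT2 : ∀ k, MemLp (T k) 2 μ := MemLp.partialSups hL2
  have hTY : ∀ k j, Integrable (fun x => T k x * Y j x) μ := fun k j =>
    (hT2 k).integrable_mul (hL2 j)
  have hincr : ∀ k, Integrable (fun x => T k x * (Y (k + 1) x - Y k x)) μ := fun k =>
    ((hTY k (k + 1)).sub (hTY k k)).congr (ae_of_all _ fun x => by simp [mul_sub])
  have horth : ∀ k, ∫ x in A, T k x * (Y (k + 1) x - Y k x) ∂μ = 0 := by
    intro k
    have hAk : MeasurableSet[ℱ k] A := ℱ.mono k.zero_le A hA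
    have hTk := hY.stronglyAdapted.partialSups k
    simp only [mul_sub]
    rw [integral_sub (hTY k (k + 1)).integrableOn (hTY k k).integrableOn,
      hY.setIntegral_mul_eq k.le_succ hTk (hTY k (k + 1)) hAk, sub_self]
  have hpath : ∀ᵐ x ∂μ, T N x ^ 2 + 8 * ∑ k ∈ Finset.range N, T k x * (Y (k + 1) x - Y k x) ≤
      16 * Y N x ^ 2 := by
    filter_upwards [ae_all_iff.2 hnn] with x hx
    simpa only [T, Pi.partialSups_apply] using sq_partialSups_add_le_sq (Y · x) hx N
  calc ∫ x in A, T N x ^ 2 ∂μ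
      = ∫ x in A, (T N x ^ 2 + 8 * ∑ k ∈ Finset.range N, T k x * (Y (k + 1) x - Y k x)) ∂μ := by
        rw [integral_add (hT2 N).integrable_sq.integrableOn
          ((integrable_finsetSum _ fun k _ => hincr k).const_mul 8).integrableOn,
          integral_const_mul, integral_finsetSum _ fun k _ => (hincr k).integrableOn]
        simp [horth]
    _ ≤ ∫ x in A, 16 * Y N x ^ 2 ∂μ :=
        setIntegral_mono_ae (((hT2 N).integrable_sq.add
          ((integrable_finsetSum _ fun k _ => hincr k).const_mul 8))).integrableOn
          ((hL2 N).integrable_sq.const_mul 16).integrableOn hpath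
    _ = 16 * ∫ x in A, Y N x ^ 2 ∂μ := integral_const_mul _ _

theorem ae_zero_le_iSup {f : ℕ → Ω → ℝ} (h0 : 0 ≤ᵐ[μ] f 0) : 0 ≤ᵐ[μ] fun x => ⨆ k, f k x :=
  h0.mono fun _ hx => Real.iSup_nonneg' ⟨0, hx⟩

theorem lintegral_ofReal_iSup_le {f : ℕ → Ω → ℝ} {c : ℝ} (hf : ∀ k, Integrable (f k) μ)
    (hmono : ∀ x, Monotone (f · x)) (h0 : 0 ≤ᵐ[μ] f 0) (hc : ∀ k, ∫ x, f k x ∂μ ≤ c) :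
    ∫⁻ x, ENNReal.ofReal (⨆ k, f k x) ∂μ ≤ ENNReal.ofReal c := by
  have hnn : ∀ k, 0 ≤ᵐ[μ] f k := fun k => h0.mono fun x hx => hx.trans (hmono x k.zero_le)
  calc ∫⁻ x, ENNReal.ofReal (⨆ k, f k x) ∂μ ≤ ∫⁻ x, ⨆ k, ENNReal.ofReal (f k x) ∂μ :=
        lintegral_mono fun x => ENNReal.ofReal_iSup_le _
    _ = ⨆ k, ∫⁻ x, ENNReal.ofReal (f k x) ∂μ :=
        lintegral_iSup' (fun k => (hf k).aemeasurable.ennreal_ofReal)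
          (ae_of_all _ fun x _ _ h => ENNReal.ofReal_le_ofReal (hmono x h))
    _ ≤ ENNReal.ofReal c := iSup_le fun k => by
        rw [← ofReal_integral_eq_lintegral_ofReal (hf k) (hnn k)]
        exact ENNReal.ofReal_le_ofReal (hc k)

theorem integrable_iSup_of_integral_le {f : ℕ → Ω → ℝ} {c : ℝ} (hf : ∀ k, Integrable (f k) μ)
    (hmono : ∀ x, Monotone (f · x)) (h0 : 0 ≤ᵐ[μ] f 0) (hc : ∀ k, ∫ x, f k x ∂μ ≤ c) :
    Integrable (fun x => ⨆ k, f k x) μ := by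
  refine ⟨(AEMeasurable.iSup fun k => (hf k).aemeasurable).aestronglyMeasurable, ?_⟩
  rw [hasFiniteIntegral_iff_ofReal (ae_zero_le_iSup h0)]
  exact (lintegral_ofReal_iSup_le hf hmono h0 hc).trans_lt ENNReal.ofReal_lt_top

theorem integral_iSup_le_of_integral_le {f : ℕ → Ω → ℝ} {c : ℝ} (hf : ∀ k, Integrable (f k) μ)
    (hmono : ∀ x, Monotone (f · x)) (h0 : 0 ≤ᵐ[μ] f 0) (hc : ∀ k, ∫ x, f k x ∂μ ≤ c) :
    ∫ x, ⨆ k, f k x ∂μ ≤ c := by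
  rw [integral_eq_lintegral_of_nonneg_ae (ae_zero_le_iSup h0)
    (integrable_iSup_of_integral_le hf hmono h0 hc).aestronglyMeasurable]
  exact ENNReal.toReal_le_of_le_ofReal ((integral_nonneg_of_ae h0).trans (hc 0))
    (lintegral_ofReal_iSup_le hf hmono h0 hc)

theorem condExp_iSup_ae_le_of_setIntegral_partialSups_le (hm : m ≤ m0) [SigmaFinite (μ.trim hm)]
    {f : ℕ → Ω → ℝ} {g : Ω → ℝ} (hf : ∀ k, Integrable (f k) μ) (h0 : 0 ≤ᵐ[μ] f 0)
    (hg : Integrable g μ)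
    (hfg : ∀ s, MeasurableSet[m] s → ∀ N, ∫ x in s, partialSups f N x ∂μ ≤ ∫ x in s, g x ∂μ) :
    μ[fun x => ⨆ k, f k x | m] ≤ᵐ[μ] μ[g | m] := by
  have hF : ∀ N, Integrable (partialSups f N) μ := Integrable.partialSups hf
  have hmono : ∀ x, Monotone (partialSups f · x) := fun x _ _ h => partialSups_monotone f h x
  have hF0 : 0 ≤ᵐ[μ] partialSups f 0 := by simpa using h0
  have hsup : (fun x => ⨆ k, f k x) = fun x => ⨆ N, partialSups f N x := by
    ext x
    simp only [Pi.partialSups_apply, ciSup_partialSups_eq']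
  rw [hsup]
  refine condExp_ae_le_of_forall_setIntegral_le hm
    (integrable_iSup_of_integral_le hF hmono hF0 fun N => by simpa using hfg _ .univ N) hg
    fun s hs => integral_iSup_le_of_integral_le (fun N => (hF N).integrableOn) hmono
      (ae_restrict_of_ae hF0) (hfg s hs)

theorem setIntegral_partialSups_condExp_le [IsFiniteMeasure μ] {𝒢 : Filtration ℕ m0}
    {ω : Ω → ℝ} (hω0 : ∀ x, 0 ≤ ω x) (hint : Integrable ω μ) {C : ℝ} (hC : 0 ≤ C)
    (hSW : ∀ k, ∀ᵐ x ∂μ, (μ[ω | 𝒢 k]) x ≤ C * (μ[fun y => √(ω y) | 𝒢 k]) x ^ 2)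
    {A : Set Ω} (hA : MeasurableSet[𝒢 0] A) (N : ℕ) :
    ∫ x in A, partialSups (fun k => μ[ω | 𝒢 k]) N x ∂μ ≤ 16 * C * ∫ x in A, ω x ∂μ := by
  set Y : ℕ → Ω → ℝ := fun k => μ[fun y => √(ω y) | 𝒢 k]
  have hsqrt : MemLp (fun y => √(ω y)) 2 μ :=
    (memLp_two_iff_integrable_sq
      (Real.continuous_sqrt.comp_aestronglyMeasurable hint.aestronglyMeasurable)).2
      (hint.congr (ae_of_all _ fun x => (Real.sq_sqrt (hω0 x)).symm))
  have hY2 : ∀ k, MemLp (Y k) 2 μ := fun k => hsqrt.condExp one_le_two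
  have hYnn : ∀ k, 0 ≤ᵐ[μ] Y k := fun k => condExp_nonneg (ae_of_all _ fun _ => Real.sqrt_nonneg _)
  have hWT : ∀ᵐ x ∂μ, partialSups (fun k => μ[ω | 𝒢 k]) N x ≤ C * partialSups Y N x ^ 2 := by
    filter_upwards [ae_all_iff.2 hSW, ae_all_iff.2 hYnn] with x hW hY0
    simp only [Pi.partialSups_apply]
    exact partialSups_le _ _ _ fun k hk => (hW k).trans (mul_le_mul_of_nonneg_left
      (pow_le_pow_left₀ (hY0 k) (le_partialSups_of_le (Y · x) hk) 2) hC)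
  calc ∫ x in A, partialSups (fun k => μ[ω | 𝒢 k]) N x ∂μ
      ≤ ∫ x in A, C * partialSups Y N x ^ 2 ∂μ :=
        setIntegral_mono_ae (Integrable.partialSups (fun _ => integrable_condExp) N).integrableOn
          ((MemLp.partialSups hY2 N).integrable_sq.const_mul C).integrableOn hWT
    _ = C * ∫ x in A, partialSups Y N x ^ 2 ∂μ := integral_const_mul _ _
    _ ≤ C * (16 * ∫ x in A, Y N x ^ 2 ∂μ) := by
        gcongr C * ?_
        exact (martingale_condExp _ 𝒢 μ).setIntegral_sq_partialSups_le hYnn hY2 hA N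
    _ ≤ C * (16 * ∫ x in A, ω x ∂μ) := by
        gcongr C * (16 * ?_)
        simpa only [Real.sq_sqrt (hω0 _)] using
          setIntegral_sq_condExp_le (𝒢.le N) hsqrt (𝒢.mono N.zero_le A hA)
    _ = 16 * C * ∫ x in A, ω x ∂μ := by ring

end MeasureTheory

theorem stmt19_general {Ω : Type*} {m0 : MeasurableSpace Ω} {μ : Measure Ω} [IsProbabilityMeasure μ]
    (ℱ : Filtration ℕ m0)
    {ω : Ω → ℝ} (hpos : ∀ x, 0 < ω x) (hint : Integrable ω μ)
    (hSW : ∃ C > 1, ∀ s : ℝ, 0 < s → s < 1 → ∀ n : ℕ,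
      ∀ᵐ x ∂μ, (μ[ω | ℱ n]) x ≤ C * ((μ[fun y => ω y ^ s | ℱ n]) x) ^ (1 / s)) :
    ∃ C' > 0, ∀ n : ℕ,
      ∀ᵐ x ∂μ,
        (μ[fun y => ⨆ m : {m : ℕ // n ≤ m}, (μ[ω | ℱ (m : ℕ)]) y | ℱ n]) x ≤
          C' * (μ[ω | ℱ n]) x := by
  obtain ⟨C, hC1, hSW⟩ := hSW
  have hω0 : ∀ x, 0 ≤ ω x := fun x => (hpos x).le
  have hSW_half : ∀ k, ∀ᵐ x ∂μ, (μ[ω | ℱ k]) x ≤ C * (μ[fun y => √(ω y) | ℱ k]) x ^ 2 := by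
    intro k
    filter_upwards [hSW (1 / 2) (by norm_num) (by norm_num) k] with x hx
    rw [show (1 : ℝ) / (1 / 2) = 2 by norm_num, Real.rpow_two] at hx
    simpa only [Real.sqrt_eq_rpow] using hx
  refine ⟨16 * C, by positivity, fun n => ?_⟩
  have hsup : (fun y => ⨆ m : {m : ℕ // n ≤ m}, (μ[ω | ℱ (m : ℕ)]) y) =
      fun y => ⨆ k, (μ[ω | ℱ.shift n k]) y :=
    funext fun y => iSup_subtype_le_eq_iSup_add (fun m => (μ[ω | ℱ m]) y) n
  have hbound : ∀ A, MeasurableSet[ℱ n] A → ∀ N,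
      ∫ x in A, partialSups (fun k => μ[ω | ℱ.shift n k]) N x ∂μ ≤ ∫ x in A, 16 * C * ω x ∂μ :=
    fun A hA N => by
      rw [integral_const_mul]
      exact setIntegral_partialSups_condExp_le hω0 hint (by positivity)
        (fun k => hSW_half (n + k)) hA N
  rw [hsup]
  filter_upwards [condExp_iSup_ae_le_of_setIntegral_partialSups_le (ℱ.le n)
    (fun k => integrable_condExp) (condExp_nonneg (ae_of_all μ hω0)) (hint.const_mul (16 * C))
    hbound, condExp_smul (16 * C) ω (ℱ n)] with x hx hsmul
  exact hx.trans_eq hsmul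

theorem stmt19 {Ω : Type*} {m0 : MeasurableSpace Ω} {μ : Measure Ω} [IsProbabilityMeasure μ]
    (ℱ : Filtration ℕ m0)
    {ω : Ω → ℝ} (hω : Measurable ω) (hpos : ∀ x, 0 < ω x) (hint : Integrable ω μ)
    (hSW : ∃ C > 1, ∀ s : ℝ, 0 < s → s < 1 → ∀ n : ℕ,
      ∀ᵐ x ∂μ, (μ[ω | ℱ n]) x ≤ C * ((μ[fun y => ω y ^ s | ℱ n]) x) ^ (1 / s)) :
    ∃ C' > 0, ∀ n : ℕ,
      ∀ᵐ x ∂μ,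
        (μ[fun y => ⨆ m : {m : ℕ // n ≤ m}, (μ[ω | ℱ (m : ℕ)]) y | ℱ n]) x ≤
          C' * (μ[ω | ℱ n]) x :=
  stmt19_general ℱ hpos hint hSW
end
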